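/- Let $\phi$ be an N-function with $\Delta_2(\{\phi, \phi^*\}) < \infty$. Then there exists $\epsilon > 0$, depending only on the $\Delta_2$ constants, such that for all $0 \le k \le 1$, all $\lambda \ge 0$ and all $t \ge 0$: $\phi_\lambda(k t) \le C\, k^{1+\epsilon}\, \phi_\lambda(t)$ for some constant $C$ depending only on the $\Delta_2$ constants. -/

import Mathlib

open MeasureTheory Filter

structure IsNFunctionDeriv (φ' : ℝ → ℝ) : Prop where
  mono : MonotoneOn φ' (Set.Ici 0)
  left_cont : ∀ t > (0 : ℝ), Tendsto φ' (nhdsWithin t (Set.Iio t)) (nhds (φ' t))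
  zero : φ' 0 = 0
  pos : ∀ t > (0 : ℝ), 0 < φ' t
  tendsto_top : Tendsto φ' atTop atTop

noncomputable def phiOf (φ' : ℝ → ℝ) (t : ℝ) : ℝ := ∫ s in (0 : ℝ)..t, φ' s

noncomputable def phiInvDeriv (φ' : ℝ → ℝ) (t : ℝ) : ℝ :=
  sInf {s : ℝ | 0 ≤ s ∧ t < φ' s}

noncomputable def phiConj (φ' : ℝ → ℝ) (t : ℝ) : ℝ :=
  ∫ s in (0 : ℝ)..t, phiInvDeriv φ' s

noncomputable def shiftedDeriv (φ' : ℝ → ℝ) (lam t : ℝ) : ℝ :=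
  φ' (lam + t) / (lam + t) * t

/-- The shifted N-function `φ_λ(t) = ∫₀ᵗ φ'_λ(s) ds`. -/
noncomputable def shiftedPhi (φ' : ℝ → ℝ) (lam t : ℝ) : ℝ :=
  ∫ s in (0 : ℝ)..t, shiftedDeriv φ' lam s

/-!
Doubling of `φ` makes `φ'` doubling. Doubling of `φ*` makes the generalized inverse of `φ'`
doubling, which for `φ'` itself means geometric growth `2 φ'(t) ≤ φ'(a t)`, and hence
`(r/s)^δ φ'(s) ≤ 2 φ'(r)` for `s ≤ r` with `δ = min (log_a 2) 1`. As `φ'_λ` is increasing,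
`φ_λ(t) ≈ t² φ'(λ+t)/(λ+t)`: from above by `t φ'_λ(t)`, from below by the integral over
`[t/2, t]` and doubling of `φ'`. Finally `s = λ + kt ≥ k(λ+t)`, so the growth bound gives
`k² φ'(s)/s ≤ 2 k^{1+δ} φ'(λ+t)/(λ+t)`.
-/

section MonotoneIntegral

variable {g : ℝ → ℝ}

lemma intervalIntegrable_of_monotoneOn_Ici (hg : MonotoneOn g (Set.Ici 0)) {a b : ℝ}
    (ha : 0 ≤ a) (hab : a ≤ b) : IntervalIntegrable g volume a b :=
  (hg.mono fun _ hx ↦ ha.trans (Set.uIcc_of_le hab ▸ hx).1).intervalIntegrable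

lemma integral_le_mul_of_monotoneOn (hg : MonotoneOn g (Set.Ici 0)) {t : ℝ} (ht : 0 ≤ t) :
    ∫ s in (0 : ℝ)..t, g s ≤ t * g t := by
  simpa using intervalIntegral.integral_mono_on ht
    (intervalIntegrable_of_monotoneOn_Ici hg le_rfl ht) intervalIntegrable_const
    fun x hx ↦ hg hx.1 ht hx.2

lemma mul_le_integral_of_monotoneOn (hg : MonotoneOn g (Set.Ici 0)) (hg0 : 0 ≤ g 0)
    {a b : ℝ} (ha : 0 ≤ a) (hab : a ≤ b) :
    (b - a) * g a ≤ ∫ s in (0 : ℝ)..b, g s := by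
  have hinit : 0 ≤ ∫ s in (0 : ℝ)..a, g s :=
    intervalIntegral.integral_nonneg ha fun x hx ↦ hg0.trans (hg Set.self_mem_Ici hx.1 hx.1)
  have htail : (b - a) * g a ≤ ∫ s in a..b, g s := by
    simpa using intervalIntegral.integral_mono_on hab intervalIntegrable_const
      (intervalIntegrable_of_monotoneOn_Ici hg ha hab) fun x hx ↦ hg ha (ha.trans hx.1) hx.1
  rw [← intervalIntegral.integral_add_adjacent_intervals
    (intervalIntegrable_of_monotoneOn_Ici hg le_rfl ha)
    (intervalIntegrable_of_monotoneOn_Ici hg ha hab)]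
  linarith

/-- For `c ≥ 0`: `2t g(2t) ≤ ∫₀^{4t} g ≤ c² ∫₀^t g ≤ c² t g(t)`; for `c < 0`, `∫₀^{4t} g ≤ 0`. -/
lemma exists_doubling_of_integral_doubling (hg : MonotoneOn g (Set.Ici 0)) (hg0 : g 0 = 0)
    {c : ℝ} (hΔ : ∀ t ≥ (0 : ℝ), ∫ s in (0 : ℝ)..2 * t, g s ≤ c * ∫ s in (0 : ℝ)..t, g s) :
    ∃ C > (0 : ℝ), ∀ t ≥ (0 : ℝ), g (2 * t) ≤ C * g t := by
  refine ⟨c ^ 2 / 2 + 1, by positivity, fun t ht ↦ ?_⟩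
  rcases ht.eq_or_lt with rfl | ht
  · simp [hg0]
  have hI : ∀ u ≥ (0 : ℝ), 0 ≤ ∫ s in (0 : ℝ)..u, g s := fun u hu ↦
    intervalIntegral.integral_nonneg hu fun x hx ↦ hg0.ge.trans (hg Set.self_mem_Ici hx.1 hx.1)
  have h4 : (2 * (2 * t) - 2 * t) * g (2 * t) ≤ ∫ s in (0 : ℝ)..2 * (2 * t), g s :=
    mul_le_integral_of_monotoneOn hg hg0.ge (by positivity) (by linarith)
  have h2 := hΔ (2 * t) (by positivity)
  have h1 := hΔ t ht.le
  have h0 := integral_le_mul_of_monotoneOn hg ht.le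
  have hI1 := hI t ht.le
  have hI2 := hI (2 * t) (by positivity)
  suffices 2 * t * g (2 * t) ≤ 2 * t * ((c ^ 2 / 2 + 1) * g t) from
    le_of_mul_le_mul_left this (by positivity)
  rcases le_total 0 c with hc | hc
  · nlinarith [mul_le_mul_of_nonneg_left h1 hc, mul_le_mul_of_nonneg_left h0 (sq_nonneg c)]
  · nlinarith [mul_nonpos_of_nonpos_of_nonneg hc hI2]

end MonotoneIntegral

namespace IsNFunctionDeriv

variable {φ' : ℝ → ℝ}

lemma nonneg (hN : IsNFunctionDeriv φ') {t : ℝ} (ht : 0 ≤ t) : 0 ≤ φ' t :=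
  hN.zero.ge.trans (hN.mono Set.self_mem_Ici ht ht)

lemma exists_deriv_doubling (hN : IsNFunctionDeriv φ') {cφ : ℝ}
    (hΔ2 : ∀ t ≥ (0 : ℝ), phiOf φ' (2 * t) ≤ cφ * phiOf φ' t) :
    ∃ c > (0 : ℝ), ∀ t ≥ (0 : ℝ), φ' (2 * t) ≤ c * φ' t :=
  exists_doubling_of_integral_doubling hN.mono hN.zero hΔ2

lemma phiInvDeriv_set_nonempty (hN : IsNFunctionDeriv φ') (u : ℝ) :
    {s : ℝ | 0 ≤ s ∧ u < φ' s}.Nonempty := by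
  obtain ⟨a, ha⟩ := (hN.tendsto_top.eventually_gt_atTop u).exists_forall_of_atTop
  exact ⟨max a 0, le_max_right a 0, ha _ (le_max_left a 0)⟩

lemma phiInvDeriv_nonneg (hN : IsNFunctionDeriv φ') (u : ℝ) : 0 ≤ phiInvDeriv φ' u :=
  le_csInf (hN.phiInvDeriv_set_nonempty u) fun _ hs ↦ hs.1

lemma monotone_phiInvDeriv (hN : IsNFunctionDeriv φ') : Monotone (phiInvDeriv φ') :=
  fun _ v huv ↦ csInf_le_csInf ⟨0, fun _ hs ↦ hs.1⟩ (hN.phiInvDeriv_set_nonempty v)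
    fun _ hs ↦ ⟨hs.1, huv.trans_lt hs.2⟩

lemma phiInvDeriv_le_of_lt {u t : ℝ} (ht : 0 ≤ t) (h : u < φ' t) : phiInvDeriv φ' u ≤ t :=
  csInf_le ⟨0, fun _ hs ↦ hs.1⟩ ⟨ht, h⟩

lemma lt_of_phiInvDeriv_lt (hN : IsNFunctionDeriv φ') {u s : ℝ} (h : phiInvDeriv φ' u < s) :
    u < φ' s := by
  obtain ⟨x, hx, hxs⟩ := exists_lt_of_csInf_lt (hN.phiInvDeriv_set_nonempty u) h
  exact hx.2.trans_le (hN.mono hx.1 (hx.1.trans hxs.le) hxs.le)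

lemma phiInvDeriv_zero (hN : IsNFunctionDeriv φ') : phiInvDeriv φ' 0 = 0 :=
  le_antisymm (le_of_forall_pos_le_add fun ε hε ↦ by
    simpa using phiInvDeriv_le_of_lt hε.le (hN.pos ε hε)) (hN.phiInvDeriv_nonneg 0)

lemma exists_two_mul_le_comp_mul (hN : IsNFunctionDeriv φ') {cψ : ℝ}
    (hΔ2conj : ∀ t ≥ (0 : ℝ), phiConj φ' (2 * t) ≤ cψ * phiConj φ' t) :
    ∃ a > (1 : ℝ), ∀ t ≥ (0 : ℝ), 2 * φ' t ≤ φ' (a * t) := by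
  obtain ⟨c, hc, hdb⟩ := exists_doubling_of_integral_doubling
    (hN.monotone_phiInvDeriv.monotoneOn _) hN.phiInvDeriv_zero hΔ2conj
  refine ⟨c ^ 2 + 1, by nlinarith, fun t ht ↦ ?_⟩
  rcases ht.eq_or_lt with rfl | ht
  · simp [hN.zero]
  set u := φ' t
  have hu : 0 < u := hN.pos t ht
  have hhalf : phiInvDeriv φ' (u / 2) ≤ t := phiInvDeriv_le_of_lt ht.le (by linarith)
  have hquad : phiInvDeriv φ' (2 * u) ≤ c ^ 2 * t := calc
    phiInvDeriv φ' (2 * u) = phiInvDeriv φ' (2 * (2 * (u / 2))) := by ring_nf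
    _ ≤ c * phiInvDeriv φ' (2 * (u / 2)) := hdb _ (by positivity)
    _ ≤ c * (c * phiInvDeriv φ' (u / 2)) := by gcongr; exact hdb _ (by positivity)
    _ ≤ c ^ 2 * t := by rw [← mul_assoc, ← sq]; gcongr
  exact (hN.lt_of_phiInvDeriv_lt (by nlinarith)).le

end IsNFunctionDeriv

section Growth

variable {g : ℝ → ℝ} {a : ℝ}

lemma two_pow_mul_le_comp_pow_mul (ha : 0 ≤ a) (hgrow : ∀ t ≥ (0 : ℝ), 2 * g t ≤ g (a * t))
    (n : ℕ) {t : ℝ} (ht : 0 ≤ t) : 2 ^ n * g t ≤ g (a ^ n * t) := by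
  induction n with
  | zero => simp
  | succ n ih => calc
      2 ^ (n + 1) * g t = 2 * (2 ^ n * g t) := by ring
      _ ≤ 2 * g (a ^ n * t) := by linarith
      _ ≤ g (a * (a ^ n * t)) := hgrow _ (by positivity)
      _ = g (a ^ (n + 1) * t) := by ring_nf

lemma rpow_div_mul_le_of_two_mul_le (hg : MonotoneOn g (Set.Ici 0))
    (hg0 : ∀ t ≥ (0 : ℝ), 0 ≤ g t) (ha : 1 < a) (hgrow : ∀ t ≥ (0 : ℝ), 2 * g t ≤ g (a * t))
    {δ : ℝ} (hδ : 0 ≤ δ) (hδa : δ ≤ Real.logb a 2) {s r : ℝ} (hs : 0 < s) (hsr : s ≤ r) :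
    (r / s) ^ δ * g s ≤ 2 * g r := by
  obtain ⟨n, hn, hn'⟩ := exists_nat_pow_near ((one_le_div hs).mpr hsr) ha
  have hpow : (r / s) ^ δ ≤ 2 ^ (n + 1) := calc
    (r / s) ^ δ ≤ (a ^ (n + 1)) ^ δ := by gcongr; exact div_nonneg (hs.le.trans hsr) hs.le
    _ = (a ^ δ) ^ (n + 1) := (Real.rpow_pow_comm (by positivity) _ _).symm
    _ ≤ (a ^ Real.logb a 2) ^ (n + 1) := by gcongr; exact ha.le
    _ = 2 ^ (n + 1) := by rw [Real.rpow_logb (by positivity) ha.ne' two_pos]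
  have hmono : g (a ^ n * s) ≤ g r :=
    hg (Set.mem_Ici.mpr (by positivity)) (Set.mem_Ici.mpr (hs.le.trans hsr))
      ((le_div_iff₀ hs).mp hn)
  calc (r / s) ^ δ * g s ≤ 2 ^ (n + 1) * g s := by gcongr; exact hg0 s hs.le
    _ = 2 * (2 ^ n * g s) := by ring
    _ ≤ 2 * g r := by linarith [two_pow_mul_le_comp_pow_mul (by positivity) hgrow n hs.le]

end Growth

lemma sq_mul_rpow_le_rpow_mul {k w δ : ℝ} (hk : 0 < k) (hkw : k ≤ w) (hδ : δ ≤ 1) :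
    k ^ 2 * w ^ δ ≤ k ^ (1 + δ) * w := calc
  k ^ 2 * w ^ δ = k ^ (1 + δ) * (k ^ (1 - δ) * w ^ δ) := by
    rw [← mul_assoc, ← Real.rpow_add hk, add_add_sub_cancel, one_add_one_eq_two, Real.rpow_two]
  _ ≤ k ^ (1 + δ) * (w ^ (1 - δ) * w ^ δ) := by
    have hw : 0 ≤ w := hk.le.trans hkw
    gcongr
  _ = k ^ (1 + δ) * w := by
    rw [← Real.rpow_add (hk.trans_le hkw), sub_add_cancel, Real.rpow_one]

lemma sq_mul_div_le_of_rpow_growth {g : ℝ → ℝ} {δ k s r : ℝ}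
    (hgrowth : (r / s) ^ δ * g s ≤ 2 * g r) (hgr : 0 ≤ g r) (hδ : δ ≤ 1) (hk : 0 < k)
    (hs : 0 < s) (hks : k * r ≤ s) (hsr : s ≤ r) :
    k ^ 2 * (g s / s) ≤ 2 * k ^ (1 + δ) * (g r / r) := by
  have hr : 0 < r := hs.trans_le hsr
  have hw : 0 < s / r := div_pos hs hr
  have hgs : g s ≤ 2 * (s / r) ^ δ * g r := by
    rw [← inv_div, Real.inv_rpow hw.le, inv_mul_le_iff₀ (by positivity)] at hgrowth
    linarith
  calc k ^ 2 * (g s / s) ≤ k ^ 2 * (2 * (s / r) ^ δ * g r / s) := by gcongr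
    _ = 2 * (k ^ 2 * (s / r) ^ δ) / (s / r) * (g r / r) := by field_simp
    _ ≤ 2 * (k ^ (1 + δ) * (s / r)) / (s / r) * (g r / r) := by
      gcongr 2 * ?_ / _ * _
      exact sq_mul_rpow_le_rpow_mul hk ((le_div_iff₀ hr).mpr hks) hδ
    _ = 2 * k ^ (1 + δ) * (g r / r) := by field_simp

namespace IsNFunctionDeriv

variable {φ' : ℝ → ℝ}

lemma exists_rpow_growth (hN : IsNFunctionDeriv φ') {cψ : ℝ}
    (hΔ2conj : ∀ t ≥ (0 : ℝ), phiConj φ' (2 * t) ≤ cψ * phiConj φ' t) :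
    ∃ δ > (0 : ℝ), δ ≤ 1 ∧ ∀ s r : ℝ, 0 < s → s ≤ r → (r / s) ^ δ * φ' s ≤ 2 * φ' r := by
  obtain ⟨a, ha, hgrow⟩ := hN.exists_two_mul_le_comp_mul hΔ2conj
  have hδ : 0 < min (Real.logb a 2) 1 := lt_min (Real.logb_pos ha one_lt_two) one_pos
  exact ⟨_, hδ, min_le_right _ _, fun s r hs hsr ↦ rpow_div_mul_le_of_two_mul_le hN.mono
    (fun _ ↦ hN.nonneg) ha hgrow hδ.le (min_le_left _ _) hs hsr⟩

lemma monotoneOn_shiftedDeriv (hN : IsNFunctionDeriv φ') {lam : ℝ} (hlam : 0 ≤ lam) :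
    MonotoneOn (shiftedDeriv φ' lam) (Set.Ici 0) := by
  have hfrac : MonotoneOn (fun t : ℝ ↦ t / (lam + t)) (Set.Ici 0) := by
    intro s hs t ht hst
    dsimp only
    rcases (add_nonneg hlam hs : 0 ≤ lam + s).eq_or_lt with h | h
    · rw [← h, div_zero]; exact div_nonneg ht (by linarith [Set.mem_Ici.mp ht])
    · rw [div_le_div_iff₀ h (by linarith)]; nlinarith
  have hshift : MonotoneOn (fun t ↦ φ' (lam + t)) (Set.Ici 0) := fun s hs t ht hst ↦
    hN.mono (Set.mem_Ici.mpr (add_nonneg hlam hs)) (Set.mem_Ici.mpr (add_nonneg hlam ht))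
      (by linarith)
  have := hshift.mul hfrac (fun t ht ↦ hN.nonneg (add_nonneg hlam ht))
    fun t ht ↦ div_nonneg ht (add_nonneg hlam ht)
  convert this using 1
  ext t
  simp only [shiftedDeriv, Pi.mul_apply]
  ring

lemma shiftedPhi_le (hN : IsNFunctionDeriv φ') {lam t : ℝ} (hlam : 0 ≤ lam) (ht : 0 ≤ t) :
    shiftedPhi φ' lam t ≤ t ^ 2 * (φ' (lam + t) / (lam + t)) := by
  have := integral_le_mul_of_monotoneOn (hN.monotoneOn_shiftedDeriv hlam) ht
  rw [shiftedDeriv] at this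
  unfold shiftedPhi
  linarith

lemma sq_mul_le_shiftedPhi (hN : IsNFunctionDeriv φ') {c : ℝ} (hc : 0 ≤ c)
    (hdb : ∀ t ≥ (0 : ℝ), φ' (2 * t) ≤ c * φ' t) {lam t : ℝ} (hlam : 0 ≤ lam) (ht : 0 < t) :
    t ^ 2 * (φ' (lam + t) / (lam + t)) ≤ 4 * c * shiftedPhi φ' lam t := by
  have hlow : (t - t / 2) * shiftedDeriv φ' lam (t / 2) ≤ shiftedPhi φ' lam t :=
    mul_le_integral_of_monotoneOn (hN.monotoneOn_shiftedDeriv hlam) (by simp [shiftedDeriv])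
      (by positivity) (by linarith)
  have hmid : φ' (lam + t) ≤ c * φ' (lam + t / 2) := calc
    φ' (lam + t) = φ' (2 * ((lam + t) / 2)) := by ring_nf
    _ ≤ c * φ' ((lam + t) / 2) := hdb _ (by positivity)
    _ ≤ c * φ' (lam + t / 2) := by
      gcongr
      exact hN.mono (Set.mem_Ici.mpr (by positivity)) (Set.mem_Ici.mpr (by positivity))
        (by linarith)
  calc t ^ 2 * (φ' (lam + t) / (lam + t)) ≤ t ^ 2 * (c * φ' (lam + t / 2) / (lam + t / 2)) := by
        have := hN.nonneg (by positivity : 0 ≤ lam + t / 2)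
        gcongr
        linarith
    _ = 4 * c * ((t - t / 2) * shiftedDeriv φ' lam (t / 2)) := by
      unfold shiftedDeriv; ring
    _ ≤ 4 * c * shiftedPhi φ' lam t := by gcongr

end IsNFunctionDeriv

/-- `φ_λ(kt) ≲ k^{1+ε} φ_λ(t)` for `0 ≤ k ≤ 1`, uniformly in the shift `λ`. -/
theorem shifted_phi_power_scaling
    (φ' : ℝ → ℝ) (cφ cψ : ℝ) (hN : IsNFunctionDeriv φ')
    (hΔ2 : ∀ t ≥ (0 : ℝ), phiOf φ' (2 * t) ≤ cφ * phiOf φ' t)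
    (hΔ2conj : ∀ t ≥ (0 : ℝ), phiConj φ' (2 * t) ≤ cψ * phiConj φ' t) :
    ∃ ε > (0 : ℝ), ∃ C > (0 : ℝ), ∀ k ∈ Set.Icc (0 : ℝ) 1, ∀ lam ≥ (0 : ℝ), ∀ t ≥ (0 : ℝ),
      shiftedPhi φ' lam (k * t) ≤ C * k ^ (1 + ε) * shiftedPhi φ' lam t := by
  obtain ⟨c, hc, hdb⟩ := hN.exists_deriv_doubling hΔ2
  obtain ⟨δ, hδ, hδ1, hgrowth⟩ := hN.exists_rpow_growth hΔ2conj
  refine ⟨δ, hδ, 8 * c, by positivity, ?_⟩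
  rintro k ⟨hk0, hk1⟩ lam hlam t ht
  rcases ht.eq_or_lt with rfl | htpos
  · simp [shiftedPhi]
  rcases hk0.eq_or_lt with rfl | hkpos
  · simp [shiftedPhi, Real.zero_rpow (by positivity : 1 + δ ≠ 0)]
  have hs : 0 < lam + k * t := by positivity
  have hsr : lam + k * t ≤ lam + t := by nlinarith
  have hks : k * (lam + t) ≤ lam + k * t := by nlinarith
  calc shiftedPhi φ' lam (k * t)
      ≤ t ^ 2 * (k ^ 2 * (φ' (lam + k * t) / (lam + k * t))) := by
        rw [← mul_assoc, ← mul_pow, mul_comm t k]; exact hN.shiftedPhi_le hlam (by positivity)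
    _ ≤ t ^ 2 * (2 * k ^ (1 + δ) * (φ' (lam + t) / (lam + t))) := by
        gcongr t ^ 2 * ?_
        exact sq_mul_div_le_of_rpow_growth (hgrowth _ _ hs hsr) (hN.nonneg (by positivity))
          hδ1 hkpos hs hks hsr
    _ = 2 * k ^ (1 + δ) * (t ^ 2 * (φ' (lam + t) / (lam + t))) := by ring
    _ ≤ 2 * k ^ (1 + δ) * (4 * c * shiftedPhi φ' lam t) :=
        mul_le_mul_of_nonneg_left (hN.sq_mul_le_shiftedPhi hc.le hdb hlam htpos) (by positivity)
    _ = 8 * c * k ^ (1 + δ) * shiftedPhi φ' lam t := by ring
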